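/- For every \epsilon > 0 there exists n_0 such that for all n \ge n_0: every n-vertex graph with no copy of \widehat{P}_4 has at most n^2/8 + \epsilon n^2 triangles. -/

import Mathlib

open SimpleGraph

/-- `G` contains a copy of `H` (a subgraph isomorphic to `H`). -/
def containsCopy {W V : Type*} (H : SimpleGraph W) (G : SimpleGraph V) : Prop :=
  ∃ f : H →g G, Function.Injective f

/-- The number of triangles of `G`. -/
noncomputable def triCount {V : Type*} (G : SimpleGraph V) : ℕ :=
  {s : Finset V | G.IsNClique 3 s}.ncard

/-- The number of edges of `G`. -/
noncomputable def edgeCount {V : Type*} (G : SimpleGraph V) : ℕ :=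
  G.edgeSet.ncard

/-- The suspension `K_1 ∨ H` of a graph `H`: a new vertex (`none`) joined to all
vertices of `H`. -/
def susp {W : Type*} (H : SimpleGraph W) : SimpleGraph (Option W) where
  Adj a b :=
    match a, b with
    | some x, some y => H.Adj x y
    | some _, none => True
    | none, some _ => True
    | none, none => False
  symm := by
    constructor
    rintro (_ | x) (_ | y) h
    · exact h
    · trivial
    · trivial
    · exact h.symm
  loopless := by
    constructor
    rintro (_ | x) h
    · exact h
    · exact H.loopless.irrefl x h

/-- The Turán number: maximum number of edges of an `H`-free graph on `n` vertices. -/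
noncomputable def exNum (n : ℕ) {W : Type*} (H : SimpleGraph W) : ℕ :=
  sSup {m | ∃ G : SimpleGraph (Fin n), ¬ containsCopy H G ∧ edgeCount G = m}

/-- The codegree of the pair `a, b`: number of common neighbours. -/
noncomputable def codeg {V : Type*} (G : SimpleGraph V) (a b : V) : ℕ :=
  (G.neighborSet a ∩ G.neighborSet b).ncard

/-!
Call an edge `uv` heavy if `codeg u v ≥ K`. In a `K₁ ∨ P₄`-free graph the link of every vertex
`u` is `P₄`-free. Hence two heavy neighbours `v ≠ v'` of `u` have disjoint common neighbourhoods
with `u` (a common vertex `w` would give a path `p v w v' q` in the link of `u`), so `u` has at most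
`n / K` heavy neighbours; and for a heavy edge `uv` at most two common neighbours `w` of `u, v`
have a second neighbour in the link of `u`.

Every triangle is then of one of three kinds:
* all three edges light: each lies in fewer than `K` triangles, and by the triangle removal
  lemma `o(n²)` edges meet every triangle, so there are `o(n²)` such triangles once `K` is fixed;
* a heavy edge `uv` whose third vertex `w` has `codeg u w ≥ 2`: at most `2n² / K` of them;
* a vertex `w` both of whose edges lie in no other triangle. The edges lying in at most one
  triangle form a graph with at most `n(n+1)/4` edges (Cauchy–Schwarz on `∑ deg²`, as in Mantel's
  theorem), each triangle of this kind uses two of them, and each of them lies in only one triangle: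
  at most `n(n+1)/8` triangles.

Applying the bounds with the set of all edges first shows that there are `O(n²)` triangles, which
is what the removal lemma needs.
-/

open Finset

namespace SimpleGraph

lemma containsCopy_susp_pathGraph_five {V : Type*} {G : SimpleGraph V} {x a b c d e : V}
    (hxa : G.Adj x a) (hxb : G.Adj x b) (hxc : G.Adj x c) (hxd : G.Adj x d) (hxe : G.Adj x e)
    (hab : G.Adj a b) (hbc : G.Adj b c) (hcd : G.Adj c d) (hde : G.Adj d e)
    (hac : a ≠ c) (had : a ≠ d) (hae : a ≠ e) (hbd : b ≠ d) (hbe : b ≠ e) (hce : c ≠ e) :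
    containsCopy (susp (pathGraph 5)) G := by
  let f : Option (Fin 5) → V := fun o => o.elim x ![a, b, c, d, e]
  have hx : ∀ i, G.Adj x (f (some i)) := by
    intro i; fin_cases i <;> assumption
  refine ⟨⟨f, ?_⟩, ?_⟩
  · rintro (_ | i) (_ | j) h
    · exact h.elim
    · exact hx j
    · exact (hx i).symm
    · change (pathGraph 5).Adj i j at h
      fin_cases i <;> fin_cases j <;> simp_all [f, pathGraph_adj, G.adj_comm]
  · rintro (_ | i) (_ | j) h
    · rfl
    · exact absurd h (hx j).ne
    · exact absurd h.symm (hx i).ne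
    · fin_cases i <;> fin_cases j <;>
        simp_all [f, hab.ne, hbc.ne, hcd.ne, hde.ne, hab.ne', hbc.ne', hcd.ne', hde.ne']

variable {V : Type*} {G : SimpleGraph V}

variable (G) in
lemma codeg_comm (u v : V) : codeg G u v = codeg G v u := by
  rw [codeg, codeg, Set.inter_comm]

variable (G) in
def thinEdgeGraph : SimpleGraph V where
  Adj u v := G.Adj u v ∧ codeg G u v ≤ 1
  symm := ⟨fun u v h => ⟨h.1.symm, codeg_comm G u v ▸ h.2⟩⟩
  loopless := ⟨fun u h => G.loopless.irrefl u h.1⟩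

lemma thinEdgeGraph_le : G.thinEdgeGraph ≤ G := fun _ _ h => h.1

lemma IsNClique.exists_eq_triple [DecidableEq V] {t : Finset V} (ht : G.IsNClique 3 t)
    {x y : V} (hx : x ∈ t) (hy : y ∈ t) (hxy : x ≠ y) :
    ∃ z, G.Adj x z ∧ G.Adj y z ∧ t = {x, y, z} := by
  have hy' : y ∈ t.erase x := mem_erase.2 ⟨hxy.symm, hy⟩
  obtain ⟨z, hz⟩ : ∃ z, (t.erase x).erase y = {z} := by
    rw [← card_eq_one, card_erase_of_mem hy', card_erase_of_mem hx, ht.card_eq]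
  have hz' : z ∈ (t.erase x).erase y := hz ▸ mem_singleton_self z
  obtain ⟨hzy, hzx, hzt⟩ : z ≠ y ∧ z ≠ x ∧ z ∈ t := by simpa using hz'
  refine ⟨z, ht.1 hx hzt hzx.symm, ht.1 hy hzt hzy.symm, ?_⟩
  rw [← hz, insert_erase hy', insert_erase hx]

lemma codeg_mono [Fintype V] {H : SimpleGraph V} (h : H ≤ G) (u v : V) :
    codeg H u v ≤ codeg G u v :=
  Set.ncard_le_ncard (Set.inter_subset_inter (neighborSet_mono h u) (neighborSet_mono h v))
    (Set.toFinite _)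

variable [Fintype V] [DecidableEq V] [DecidableRel G.Adj]

lemma codeg_eq_card (u v : V) : codeg G u v = #(G.neighborFinset u ∩ G.neighborFinset v) := by
  rw [codeg, ← Set.ncard_coe_finset, coe_inter, coe_neighborFinset, coe_neighborFinset]

lemma exists_commonNbr_notMem {u v : V} {s : Finset V} (h : #s < codeg G u v) :
    ∃ w, G.Adj u w ∧ G.Adj v w ∧ w ∉ s := by
  rw [codeg_eq_card] at h
  obtain ⟨w, hw, hws⟩ := exists_mem_notMem_of_card_lt_card h
  rw [mem_inter, mem_neighborFinset, mem_neighborFinset] at hw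
  exact ⟨w, hw.1, hw.2, hws⟩

lemma card_filter_mem_cliqueFinset_three_le_codeg {x y : V} (hxy : x ≠ y) :
    #{t ∈ G.cliqueFinset 3 | x ∈ t ∧ y ∈ t} ≤ codeg G x y := by
  rw [codeg_eq_card]
  refine (card_le_card ?_).trans (card_image_le (f := fun z => ({x, y, z} : Finset V)))
  intro t ht
  rw [mem_filter, mem_cliqueFinset_iff] at ht
  obtain ⟨z, hxz, hyz, rfl⟩ := ht.1.exists_eq_triple ht.2.1 ht.2.2 hxy
  exact mem_image_of_mem _ (by simp [hxz, hyz])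

lemma card_mul_le_card_mul_of_cover {𝒯 : Finset (Finset V)} {s : Finset (Sym2 V)} {m k : ℕ}
    (h𝒯 : 𝒯 ⊆ G.cliqueFinset 3) (hs : s ⊆ G.edgeFinset)
    (hm : ∀ t ∈ 𝒯, m ≤ #{e ∈ s | ∀ x ∈ e, x ∈ t})
    (hk : ∀ t ∈ 𝒯, ∀ x ∈ t, ∀ y ∈ t, s(x, y) ∈ s → codeg G x y ≤ k) :
    #𝒯 * m ≤ #s * k := by
  refine card_mul_le_card_mul (fun t e => ∀ x ∈ e, x ∈ t) hm fun e he => ?_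
  induction e using Sym2.ind with | h x y => ?_
  have hxy : x ≠ y := G.ne_of_adj (mem_edgeFinset.1 (hs he))
  simp only [bipartiteBelow, Sym2.mem_iff, forall_eq_or_imp, forall_eq]
  obtain hempty | ⟨t, ht⟩ := ({t ∈ 𝒯 | x ∈ t ∧ y ∈ t}).eq_empty_or_nonempty
  · simp [hempty]
  obtain ⟨ht, hx, hy⟩ := mem_filter.1 ht
  calc #{t ∈ 𝒯 | x ∈ t ∧ y ∈ t} ≤ #{t ∈ G.cliqueFinset 3 | x ∈ t ∧ y ∈ t} :=
        card_le_card (filter_subset_filter _ h𝒯)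
    _ ≤ codeg G x y := card_filter_mem_cliqueFinset_three_le_codeg hxy
    _ ≤ k := hk t ht x hx y hy he

theorem four_mul_card_edgeFinset_le_of_codeg_le {k : ℕ} (h : ∀ u v, G.Adj u v → codeg G u v ≤ k) :
    4 * #G.edgeFinset ≤ Fintype.card V * (Fintype.card V + k) := by
  have hdeg : ∀ u v, G.Adj u v → G.degree u + G.degree v ≤ Fintype.card V + k := by
    intro u v huv
    rw [← card_neighborFinset_eq_degree, ← card_neighborFinset_eq_degree,
      ← card_union_add_card_inter, ← codeg_eq_card]
    exact add_le_add (card_le_univ _) (h u v huv)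
  have hswap : ∑ u, ∑ v ∈ G.neighborFinset u, G.degree v = ∑ v, G.degree v ^ 2 := by
    rw [sum_comm' (t' := univ) (s' := fun v => G.neighborFinset v) (by simp [G.adj_comm])]
    simp [sq]
  have hsq : 2 * ∑ u, G.degree u ^ 2 ≤ 2 * #G.edgeFinset * (Fintype.card V + k) :=
    calc 2 * ∑ u, G.degree u ^ 2
        = ∑ u, ∑ v ∈ G.neighborFinset u, (G.degree u + G.degree v) := by
          simp only [sum_add_distrib, sum_const, card_neighborFinset_eq_degree, smul_eq_mul,
            hswap, sq, two_mul]
      _ ≤ ∑ u, ∑ _v ∈ G.neighborFinset u, (Fintype.card V + k) :=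
          sum_le_sum fun u _ => sum_le_sum fun v hv => hdeg u v ((mem_neighborFinset ..).1 hv)
      _ = 2 * #G.edgeFinset * (Fintype.card V + k) := by
          simp only [sum_const, card_neighborFinset_eq_degree, smul_eq_mul, ← sum_mul,
            sum_degrees_eq_twice_card_edges]
  have hcs : (2 * #G.edgeFinset) ^ 2 ≤ Fintype.card V * ∑ u, G.degree u ^ 2 := by
    simpa [sum_degrees_eq_twice_card_edges] using
      sq_sum_le_card_mul_sum_sq (s := univ) (f := fun v => G.degree v)
  rcases Nat.eq_zero_or_pos #G.edgeFinset with he | he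
  · simp [he]
  exact Nat.le_of_mul_le_mul_right (by nlinarith) he

lemma disjoint_commonNbrs (hG : ¬ containsCopy (susp (pathGraph 5)) G) {u v v' : V}
    (hv : G.Adj u v) (hv' : G.Adj u v') (hvv' : v ≠ v')
    (h : 4 ≤ codeg G u v) (h' : 4 ≤ codeg G u v') :
    Disjoint (G.neighborFinset u ∩ G.neighborFinset v)
      (G.neighborFinset u ∩ G.neighborFinset v') := by
  rw [Finset.disjoint_left]
  intro w hw hw'
  simp only [mem_inter, mem_neighborFinset] at hw hw'
  obtain ⟨p, hup, hvp, hp⟩ := exists_commonNbr_notMem (s := {w, v'})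
    (card_le_two.trans_lt (by omega : 2 < codeg G u v))
  obtain ⟨q, huq, hv'q, hq⟩ := exists_commonNbr_notMem (s := {w, v, p})
    (card_le_three.trans_lt (by omega : 3 < codeg G u v'))
  simp only [mem_insert, mem_singleton, not_or] at hp hq
  -- the path `p v w v' q` in the link of `u`
  exact hG (containsCopy_susp_pathGraph_five hup hv hw.1 hv' huq hvp.symm hw.2 hw'.2.symm hv'q
    hp.1 hp.2 (Ne.symm hq.2.2) hvv' (Ne.symm hq.2.1) (Ne.symm hq.1))

variable (G) in
noncomputable def heavyNbrs (K : ℕ) (u : V) : Finset V :=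
  {v ∈ G.neighborFinset u | K ≤ codeg G u v}

lemma card_heavyNbrs_mul_le (hG : ¬ containsCopy (susp (pathGraph 5)) G) {K : ℕ} (hK : 4 ≤ K)
    (u : V) : #(G.heavyNbrs K u) * K ≤ Fintype.card V := by
  have hdisj : (G.heavyNbrs K u : Set V).PairwiseDisjoint
      fun v => G.neighborFinset u ∩ G.neighborFinset v := by
    intro v hv v' hv' hvv'
    simp only [heavyNbrs, mem_coe, mem_filter, mem_neighborFinset] at hv hv'
    exact disjoint_commonNbrs hG hv.1 hv'.1 hvv' (hK.trans hv.2) (hK.trans hv'.2)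
  calc #(G.heavyNbrs K u) * K = ∑ _v ∈ G.heavyNbrs K u, K := by rw [sum_const, smul_eq_mul]
    _ ≤ ∑ v ∈ G.heavyNbrs K u, codeg G u v := sum_le_sum fun v hv => (mem_filter.1 hv).2
    _ = #((G.heavyNbrs K u).biUnion fun v => G.neighborFinset u ∩ G.neighborFinset v) := by
        rw [card_biUnion hdisj]
        exact sum_congr rfl fun v _ => codeg_eq_card u v
    _ ≤ Fintype.card V := card_le_univ _

lemma not_adj_of_commonNbrs (hG : ¬ containsCopy (susp (pathGraph 5)) G) {u v w₁ w₂ w₃ z : V}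
    (huv : G.Adj u v) (h : 4 ≤ codeg G u v)
    (hu₁ : G.Adj u w₁) (hu₂ : G.Adj u w₂) (hu₃ : G.Adj u w₃)
    (hv₁ : G.Adj v w₁) (hv₂ : G.Adj v w₂) (hv₃ : G.Adj v w₃)
    (h₁₂ : w₁ ≠ w₂) (h₁₃ : w₁ ≠ w₃) (h₂₃ : w₂ ≠ w₃)
    (huz : G.Adj u z) (hzv : z ≠ v) (h₃z : G.Adj w₃ z) : ¬ G.Adj w₁ w₂ := by
  intro h₁₂'
  obtain ⟨a, hua, hva, ha⟩ := exists_commonNbr_notMem (s := {w₁, w₂, w₃})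
    (card_le_three.trans_lt (by omega : 3 < codeg G u v))
  simp only [mem_insert, mem_singleton, not_or] at ha
  apply hG
  -- the path `w₂ w₁ w₃ v a`, `w₁ w₂ w₃ v a` or `z w₃ v w₁ w₂` in the link of `u`
  obtain rfl | hz₁ := eq_or_ne z w₁
  · exact containsCopy_susp_pathGraph_five hu₂ hu₁ hu₃ huv hua h₁₂'.symm h₃z.symm hv₃.symm hva
      h₂₃ hv₂.ne' (Ne.symm ha.2.1) hv₁.ne' (Ne.symm ha.1) (Ne.symm ha.2.2)
  obtain rfl | hz₂ := eq_or_ne z w₂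
  · exact containsCopy_susp_pathGraph_five hu₁ hu₂ hu₃ huv hua h₁₂' h₃z.symm hv₃.symm hva
      h₁₃ hv₁.ne' (Ne.symm ha.1) hv₂.ne' (Ne.symm ha.2.1) (Ne.symm ha.2.2)
  · exact containsCopy_susp_pathGraph_five huz hu₃ huv hu₁ hu₂ h₃z.symm hv₃.symm hv₁ h₁₂'
      hzv hz₁ hz₂ (Ne.symm h₁₃) (Ne.symm h₂₃) hv₂.ne

lemma card_commonNbrs_filter_two_le_codeg_le_two (hG : ¬ containsCopy (susp (pathGraph 5)) G)
    {u v : V} (huv : G.Adj u v) (h : 4 ≤ codeg G u v) :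
    #{w ∈ G.neighborFinset u ∩ G.neighborFinset v | 2 ≤ codeg G u w} ≤ 2 := by
  by_contra! hcard
  obtain ⟨w₁, w₂, w₃, hw₁, hw₂, hw₃, h₁₂, h₁₃, h₂₃⟩ := two_lt_card_iff.1 hcard
  have branch : ∀ w ∈ {w ∈ G.neighborFinset u ∩ G.neighborFinset v | 2 ≤ codeg G u w},
      G.Adj u w ∧ G.Adj v w ∧ ∃ z, G.Adj u z ∧ G.Adj w z ∧ z ≠ v := by
    intro w hw
    simp only [mem_filter, mem_inter, mem_neighborFinset] at hw
    obtain ⟨z, huz, hwz, hz⟩ :=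
      exists_commonNbr_notMem (s := {v}) (by simpa [Nat.lt_iff_add_one_le] using hw.2)
    exact ⟨hw.1.1, hw.1.2, z, huz, hwz, by simpa using hz⟩
  obtain ⟨hu₁, hv₁, z₁, huz₁, h₁z₁, hz₁v⟩ := branch w₁ hw₁
  obtain ⟨hu₂, hv₂, z₂, huz₂, h₂z₂, hz₂v⟩ := branch w₂ hw₂
  obtain ⟨hu₃, hv₃, z₃, huz₃, h₃z₃, hz₃v⟩ := branch w₃ hw₃
  have n₁₂ :=
    not_adj_of_commonNbrs hG huv h hu₁ hu₂ hu₃ hv₁ hv₂ hv₃ h₁₂ h₁₃ h₂₃ huz₃ hz₃v h₃z₃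
  have hz₁₂ : z₁ ≠ w₂ := by rintro rfl; exact n₁₂ h₁z₁
  have hz₂₁ : z₂ ≠ w₁ := by rintro rfl; exact n₁₂ h₂z₂.symm
  apply hG
  -- the path `w₁ z₁ w₂ v a` or `z₁ w₁ v w₂ z₂` in the link of `u`
  obtain rfl | hz := eq_or_ne z₁ z₂
  · obtain ⟨a, hua, hva, ha⟩ := exists_commonNbr_notMem (s := {w₁, w₂, z₁})
      (card_le_three.trans_lt (by omega : 3 < codeg G u v))
    simp only [mem_insert, mem_singleton, not_or] at ha
    exact containsCopy_susp_pathGraph_five hu₁ huz₁ hu₂ huv hua h₁z₁ h₂z₂.symm hv₂.symm hva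
      h₁₂ hv₁.ne' (Ne.symm ha.1) hz₁v (Ne.symm ha.2.2) (Ne.symm ha.2.1)
  · exact containsCopy_susp_pathGraph_five huz₁ hu₁ huv hu₂ huz₂ h₁z₁.symm hv₁.symm hv₂ h₂z₂
      hz₁v hz₁₂ hz h₁₂ (Ne.symm hz₂₁) (Ne.symm hz₂v)

variable (G) in
noncomputable def lightTriangles (K : ℕ) : Finset (Finset V) :=
  {t ∈ G.cliqueFinset 3 | ∀ x ∈ t, ∀ y ∈ t, x ≠ y → codeg G x y < K}

variable (G) in
noncomputable def thinTriangles : Finset (Finset V) :=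
  {t ∈ G.cliqueFinset 3 | ∃ c ∈ t, ∀ x ∈ t, x ≠ c → codeg G x c ≤ 1}

variable (G) in
noncomputable def branchTriangles (K : ℕ) : Finset (Finset V) :=
  univ.biUnion fun a => (G.heavyNbrs K a).biUnion fun b =>
    {c ∈ G.neighborFinset a ∩ G.neighborFinset b | 2 ≤ codeg G a c}.image fun c => {a, b, c}

lemma cliqueFinset_three_subset (K : ℕ) :
    G.cliqueFinset 3 ⊆ G.lightTriangles K ∪ G.thinTriangles ∪ G.branchTriangles K := by
  intro t ht
  have ht' := mem_cliqueFinset_iff.1 ht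
  by_cases hlight : ∀ x ∈ t, ∀ y ∈ t, x ≠ y → codeg G x y < K
  · exact mem_union_left _ (mem_union_left _ (mem_filter.2 ⟨ht, hlight⟩))
  simp only [not_forall, not_lt] at hlight
  obtain ⟨a, ha, b, hb, hab, hK⟩ := hlight
  obtain ⟨c, hac, hbc, rfl⟩ := ht'.exists_eq_triple ha hb hab
  have hab' : G.Adj a b := ht'.1 ha hb hab
  have branch : ∀ x y, G.Adj x y → K ≤ codeg G x y → G.Adj x c → G.Adj y c →
      2 ≤ codeg G x c → {x, y, c} ∈ G.branchTriangles K := by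
    intro x y hxy hK hxc hyc h2
    simp only [branchTriangles, mem_biUnion, mem_univ, true_and, mem_image]
    exact ⟨x, y, mem_filter.2 ⟨(mem_neighborFinset ..).2 hxy, hK⟩, c,
      mem_filter.2 ⟨by simp [hxc, hyc], h2⟩, rfl⟩
  by_cases hac2 : 2 ≤ codeg G a c
  · exact mem_union_right _ (branch a b hab' hK hac hbc hac2)
  by_cases hbc2 : 2 ≤ codeg G b c
  · rw [insert_comm]
    exact mem_union_right _ (branch b a hab'.symm (codeg_comm G a b ▸ hK) hbc hac hbc2)
  refine mem_union_left _ (mem_union_right _ (mem_filter.2 ⟨ht, c, by simp, ?_⟩))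
  intro x hx hxc
  simp only [mem_insert, mem_singleton] at hx
  rcases hx with rfl | rfl | rfl <;> [omega; omega; exact absurd rfl hxc]

lemma card_lightTriangles_le {K : ℕ} {s : Finset (Sym2 V)} (hs : s ⊆ G.edgeFinset)
    (hcov : ∀ t ∈ G.cliqueFinset 3, ∃ e ∈ s, ∀ x ∈ e, x ∈ t) :
    #(G.lightTriangles K) ≤ K * #s := by
  suffices #(G.lightTriangles K) * 1 ≤ #s * K by simpa [mul_comm] using this
  refine card_mul_le_card_mul_of_cover (filter_subset _ _) hs
    (fun t ht => ?_) (fun t ht x hx y hy hxy => ?_)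
  · obtain ⟨e, he, het⟩ := hcov t (mem_filter.1 ht).1
    exact card_pos.2 ⟨e, mem_filter.2 ⟨he, het⟩⟩
  · exact ((mem_filter.1 ht).2 x hx y hy (G.ne_of_adj (mem_edgeFinset.1 (hs hxy)))).le

lemma card_thinTriangles_le :
    8 * #G.thinTriangles ≤ Fintype.card V * (Fintype.card V + 1) := by
  classical
  have hR : 4 * #G.thinEdgeGraph.edgeFinset ≤ Fintype.card V * (Fintype.card V + 1) :=
    four_mul_card_edgeFinset_le_of_codeg_le (G := G.thinEdgeGraph) fun u v huv =>
      (codeg_mono thinEdgeGraph_le u v).trans huv.2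
  suffices #G.thinTriangles * 2 ≤ #G.thinEdgeGraph.edgeFinset * 1 by omega
  refine card_mul_le_card_mul_of_cover (G := G) (filter_subset _ _)
    (edgeFinset_mono thinEdgeGraph_le) (fun t ht => ?_) (fun t _ x _ y _ hxy => ?_)
  · obtain ⟨ht, c, hc, hthin⟩ := mem_filter.1 ht
    have ht' := mem_cliqueFinset_iff.1 ht
    obtain ⟨a, ha, hac⟩ : ∃ a ∈ t, a ≠ c := by
      by_contra! h
      have := card_le_one.2 fun x hx y hy => (h x hx).trans (h y hy).symm
      rw [ht'.card_eq] at this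
      omega
    obtain ⟨b, hcb, hab, rfl⟩ := ht'.exists_eq_triple hc ha hac.symm
    refine le_trans ?_ (card_le_card (s := {s(a, c), s(b, c)}) ?_)
    · rw [card_pair]
      simp [hab.ne, hac]
    · intro e he
      simp only [mem_insert, mem_singleton] at he
      rcases he with rfl | rfl <;> simp only [mem_filter, mem_edgeFinset, mem_edgeSet]
      · exact ⟨⟨ht'.1 (by simp) (by simp) hac, hthin a (by simp) hac⟩, by simp⟩
      · exact ⟨⟨hcb.symm, hthin b (by simp) hcb.ne'⟩, by simp⟩
  · exact (mem_edgeFinset.1 hxy).2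

lemma card_branchTriangles_mul_le (hG : ¬ containsCopy (susp (pathGraph 5)) G) {K : ℕ}
    (hK : 4 ≤ K) : #(G.branchTriangles K) * K ≤ 2 * Fintype.card V ^ 2 := by
  have hcard : #(G.branchTriangles K) ≤ ∑ a, ∑ _b ∈ G.heavyNbrs K a, 2 :=
    calc #(G.branchTriangles K)
        ≤ ∑ a, ∑ b ∈ G.heavyNbrs K a,
            #{c ∈ G.neighborFinset a ∩ G.neighborFinset b | 2 ≤ codeg G a c} :=
          card_biUnion_le.trans <| sum_le_sum fun a _ =>
            card_biUnion_le.trans <| sum_le_sum fun b _ => card_image_le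
      _ ≤ ∑ a, ∑ _b ∈ G.heavyNbrs K a, 2 := sum_le_sum fun a _ => sum_le_sum fun b hb =>
          card_commonNbrs_filter_two_le_codeg_le_two hG
            ((mem_neighborFinset ..).1 (mem_filter.1 hb).1) (hK.trans (mem_filter.1 hb).2)
  calc #(G.branchTriangles K) * K ≤ 2 * ∑ a, #(G.heavyNbrs K a) * K := by
        simpa [sum_mul, mul_sum, mul_comm, mul_left_comm] using Nat.mul_le_mul_right K hcard
    _ ≤ 2 * ∑ _a : V, Fintype.card V :=
        Nat.mul_le_mul_left 2 (sum_le_sum fun a _ => card_heavyNbrs_mul_le hG hK a)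
    _ = 2 * Fintype.card V ^ 2 := by simp [sq]

theorem card_cliqueFinset_three_le (hG : ¬ containsCopy (susp (pathGraph 5)) G) {K : ℕ}
    (hK : 4 ≤ K) {s : Finset (Sym2 V)} (hs : s ⊆ G.edgeFinset)
    (hcov : ∀ t ∈ G.cliqueFinset 3, ∃ e ∈ s, ∀ x ∈ e, x ∈ t) :
    (#(G.cliqueFinset 3) : ℝ) ≤
      K * #s + Fintype.card V * (Fintype.card V + 1) / 8 + 2 * Fintype.card V ^ 2 / K := by
  set n := Fintype.card V
  have hsplit : #(G.cliqueFinset 3) ≤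
      #(G.lightTriangles K) + #G.thinTriangles + #(G.branchTriangles K) :=
    (card_le_card (cliqueFinset_three_subset K)).trans
      ((card_union_le _ _).trans (Nat.add_le_add_right (card_union_le _ _) _))
  have hlight : (#(G.lightTriangles K) : ℝ) ≤ K * #s := by
    exact_mod_cast card_lightTriangles_le hs hcov
  have hthin : (#G.thinTriangles : ℝ) ≤ n * (n + 1) / 8 := by
    rw [le_div_iff₀ (by norm_num), mul_comm]
    exact_mod_cast card_thinTriangles_le
  have hbranch : (#(G.branchTriangles K) : ℝ) ≤ 2 * n ^ 2 / K := by
    rw [le_div_iff₀ (by exact_mod_cast (by omega : 0 < K))]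
    exact_mod_cast card_branchTriangles_mul_le hG hK
  calc (#(G.cliqueFinset 3) : ℝ)
      ≤ #(G.lightTriangles K) + #G.thinTriangles + #(G.branchTriangles K) := by
        exact_mod_cast hsplit
    _ ≤ _ := by gcongr

lemma triCount_eq_card_cliqueFinset : triCount G = #(G.cliqueFinset 3) := by
  rw [triCount, ← Set.ncard_coe_finset, coe_cliqueFinset]
  rfl

lemma exists_triangle_cover {ε : ℝ}
    (h : (#(G.cliqueFinset 3) : ℝ) < triangleRemovalBound ε * Fintype.card V ^ 3) :
    ∃ s ⊆ G.edgeFinset, (∀ t ∈ G.cliqueFinset 3, ∃ e ∈ s, ∀ x ∈ e, x ∈ t) ∧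
      (#s : ℝ) < ε * Fintype.card V ^ 2 := by
  obtain ⟨G', hle, _, hcard, hfree⟩ := G.triangle_removal h
  refine ⟨G.edgeFinset \ G'.edgeFinset, sdiff_subset, fun t ht => ?_, ?_⟩
  · by_contra! hcov
    have ht' := mem_cliqueFinset_iff.1 ht
    refine hfree t ⟨fun x hx y hy hxy => ?_, ht'.card_eq⟩
    by_contra hxy'
    obtain ⟨z, hz, hzt⟩ := hcov s(x, y) (by simp [ht'.1 hx hy hxy, hxy'])
    rcases Sym2.mem_iff.1 hz with rfl | rfl <;> contradiction
  · rw [card_sdiff_of_subset (edgeFinset_mono hle),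
      Nat.cast_sub (card_le_card (edgeFinset_mono hle))]
    simpa using hcard

theorem card_cliqueFinset_three_le_of_lt (hG : ¬ containsCopy (susp (pathGraph 5)) G) {K : ℕ}
    (hK : 4 ≤ K) {ε : ℝ} (hn : (K + 1 : ℝ) < triangleRemovalBound ε * Fintype.card V) :
    (#(G.cliqueFinset 3) : ℝ) ≤ K * ε * Fintype.card V ^ 2 +
      Fintype.card V * (Fintype.card V + 1) / 8 + 2 * Fintype.card V ^ 2 / K := by
  set n := Fintype.card V
  have hK' : (4 : ℝ) ≤ K := by exact_mod_cast hK
  have hn1 : (1 : ℝ) ≤ n := Nat.one_le_cast.2 <| Nat.pos_of_ne_zero fun hn0 => by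
    rw [hn0, Nat.cast_zero, mul_zero] at hn
    linarith
  have hedges : (#G.edgeFinset : ℝ) ≤ n ^ 2 / 2 :=
    (Nat.cast_le.2 card_edgeFinset_le_card_choose_two).trans
      (by simpa using Nat.choose_le_pow_div 2 n)
  have hcovE : ∀ t ∈ G.cliqueFinset 3, ∃ e ∈ G.edgeFinset, ∀ x ∈ e, x ∈ t := by
    intro t ht
    obtain ⟨a, b, c, hab, -, -, rfl⟩ := is3Clique_iff.1 (mem_cliqueFinset_iff.1 ht)
    exact ⟨s(a, b), mem_edgeFinset.2 hab, by simp⟩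
  have hfew : (#(G.cliqueFinset 3) : ℝ) < triangleRemovalBound ε * n ^ 3 := by
    have := card_cliqueFinset_three_le hG hK subset_rfl hcovE
    have h2K : 2 * (n : ℝ) ^ 2 / K ≤ n ^ 2 / 2 := by
      rw [div_le_div_iff₀ (by linarith) (by norm_num)]; nlinarith
    calc (#(G.cliqueFinset 3) : ℝ) ≤ (K + 1) * n ^ 2 := by nlinarith
      _ < triangleRemovalBound ε * n * n ^ 2 := by gcongr
      _ = triangleRemovalBound ε * n ^ 3 := by ring
  obtain ⟨s, hs, hcov, hcard⟩ := exists_triangle_cover hfew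
  calc (#(G.cliqueFinset 3) : ℝ) ≤ K * #s + n * (n + 1) / 8 + 2 * n ^ 2 / K :=
        card_cliqueFinset_three_le hG hK hs hcov
    _ ≤ K * (ε * n ^ 2) + n * (n + 1) / 8 + 2 * n ^ 2 / K := by gcongr
    _ = _ := by ring

end SimpleGraph

/-- `ex(n, K_3, \widehat{P}_4) ≤ n²/8 + o(n²)`. -/
theorem suspension_P4_asymptotic_upper (ε : ℝ) (hε : 0 < ε) :
    ∃ n0 : ℕ, ∀ n : ℕ, n0 ≤ n → ∀ G : SimpleGraph (Fin n),
      ¬ containsCopy (susp (pathGraph 5)) G →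
      (triCount G : ℝ) ≤ (n : ℝ) ^ 2 / 8 + ε * (n : ℝ) ^ 2 := by
  classical
  obtain ⟨K, hK4, hK⟩ : ∃ K : ℕ, 4 ≤ K ∧ 6 / ε ≤ K :=
    ⟨⌈6 / ε⌉₊ + 4, by omega, (Nat.le_ceil _).trans (by norm_cast; omega)⟩
  have hKpos : (0 : ℝ) < K := by exact_mod_cast (by omega : 0 < K)
  set δ := triangleRemovalBound (ε / (3 * K))
  have hδ : 0 < δ := triangleRemovalBound_pos (by positivity)
  refine ⟨⌈(K + 1) / δ⌉₊ + ⌈1 / ε⌉₊ + 1, fun n hn G hG => ?_⟩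
  have hn₁ : (K + 1 : ℝ) < δ * n := by
    rw [mul_comm, ← div_lt_iff₀ hδ]
    exact (Nat.le_ceil _).trans_lt
      (by exact_mod_cast (by omega : ⌈((K : ℝ) + 1) / δ⌉₊ < n))
  have hn₂ : 1 / ε ≤ n := (Nat.le_ceil _).trans (by norm_cast; omega)
  have hbound := card_cliqueFinset_three_le_of_lt hG hK4 (by simpa using hn₁)
  rw [triCount_eq_card_cliqueFinset]
  simp only [Fintype.card_fin] at hbound
  refine hbound.trans ?_
  have hKε : (K : ℝ) * (ε / (3 * K)) = ε / 3 := by field_simp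
  have hεK : 6 ≤ ε * K := by rwa [div_le_iff₀ hε, mul_comm] at hK
  have hεn : 1 ≤ ε * n := by rwa [div_le_iff₀ hε, mul_comm] at hn₂
  have h2K : 2 * (n : ℝ) ^ 2 / K ≤ ε / 3 * n ^ 2 := by
    rw [div_le_iff₀ hKpos]; nlinarith [sq_nonneg (n : ℝ)]
  rw [hKε]
  nlinarith [sq_nonneg (n : ℝ), (n.cast_nonneg : (0 : ℝ) ≤ n)]
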